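/- arXiv:2411.01610 — 3 statements merged into one kernel-verified Lean document; each statement's English description precedes it below -/
import Mathlib

section
/- Under the linear-logit assumption, for any choice of real coefficients α and β, any expert LM size s_E > 0, any amateur LM size s_A > 0, and any amateur temperature T > 1, the contrastive decoding logit satisfies L(s_E) − (1/T)·L(s_A) = (1 − 1/T)·L(s_H), where s_H = ((s_E)^T / s_A)^(1/(T−1)). That is, contrastive decoding equals (1 − 1/T) times the logit of a hypothetical LM of size s_H. -/
/-- Under the linear-logit assumption `L s = α + β * log s`, contrastive decoding
`L s_E − (1/T)·L s_A` equals `(1 − 1/T)` times the logit of a hypothetical LM of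
size `s_H = ((s_E)^T / s_A)^(1/(T−1))`. -/
theorem cd_is_scaled_hypothetical_logit
    (α β sE sA T : ℝ) (hsE : 0 < sE) (hsA : 0 < sA) (hT : 1 < T) :
    (fun s : ℝ => α + β * Real.log s) sE
      - (1 / T) * (fun s : ℝ => α + β * Real.log s) sA
    = (1 - 1 / T) *
        (fun s : ℝ => α + β * Real.log s) ((sE ^ T / sA) ^ (1 / (T - 1)) : ℝ) := by
  have hT0 : T ≠ 0 := by linarith
  have hT1 : T - 1 ≠ 0 := by linarith
  have hpos : 0 < sE ^ T / sA := div_pos (Real.rpow_pos_of_pos hsE T) hsA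
  simp only [Real.log_rpow hpos, Real.log_div (ne_of_gt (Real.rpow_pos_of_pos hsE T)) hsA.ne',
    Real.log_rpow hsE]
  field_simp
  ring
end

section
/- Suppose that for every token w in a finite nonempty vocabulary V the logit of an LM of size s > 0 is ℓ_s(w) = α_w + β_w·(log s) for some reals α_w, β_w, and let T > 1, s_E > 0, s_A > 0, and s_H = ((s_E)^T / s_A)^(1/(T−1)). Then the contrastive decoding distribution, which assigns to each w the probability exp(ℓ_{s_E}(w) − (1/T)·ℓ_{s_A}(w)) / Σ_{x ∈ V} exp(ℓ_{s_E}(x) − (1/T)·ℓ_{s_A}(x)), equals the softmax of the logits ℓ_{s_H} at temperature τ = T/(T−1): for all w, it equals exp(ℓ_{s_H}(w)/τ) / Σ_{x ∈ V} exp(ℓ_{s_H}(x)/τ). -/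
open Finset in
/-- Under the token-wise linear-logit assumption, the contrastive decoding
distribution equals the softmax of the hypothetical LM's logits
(of size `s_H = ((s_E)^T / s_A)^(1/(T−1))`) at temperature `τ = T/(T−1)`. -/
theorem cd_distribution_eq_hypothetical_softmax
    {V : Type*} [Fintype V] [Nonempty V]
    (α β : V → ℝ) (T sE sA : ℝ) (hT : 1 < T) (hsE : 0 < sE) (hsA : 0 < sA)
    (ℓ : ℝ → V → ℝ) (hℓ : ∀ s > (0 : ℝ), ∀ w, ℓ s w = α w + β w * Real.log s)
    (sH : ℝ) (hsH : sH = (sE ^ T / sA) ^ (1 / (T - 1)))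
    (w : V) :
    Real.exp (ℓ sE w - (1 / T) * ℓ sA w)
        / ∑ x : V, Real.exp (ℓ sE x - (1 / T) * ℓ sA x)
      = Real.exp (ℓ sH w / (T / (T - 1)))
          / ∑ x : V, Real.exp (ℓ sH x / (T / (T - 1))) := by
  have hT0 : (0 : ℝ) < T := lt_trans one_pos hT
  have hT1 : (0 : ℝ) < T - 1 := by linarith
  have hbase : 0 < sE ^ T / sA := div_pos (Real.rpow_pos_of_pos hsE T) hsA
  have hsH0 : 0 < sH := hsH ▸ Real.rpow_pos_of_pos hbase _
  have hlogH : Real.log sH = (1 / (T - 1)) * (T * Real.log sE - Real.log sA) := by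
    rw [hsH, Real.log_rpow hbase, Real.log_div (ne_of_gt (Real.rpow_pos_of_pos hsE T)) hsA.ne',
      Real.log_rpow hsE]
  have key : ∀ x, ℓ sE x - (1 / T) * ℓ sA x = ℓ sH x / (T / (T - 1)) := by
    intro x
    rw [hℓ sE hsE x, hℓ sA hsA x, hℓ sH hsH0 x, hlogH]
    field_simp
    ring
  simp only [key]
end

section
/- Fix sizes s_E > s_A > 0. The function T ↦ ((s_E)^T / s_A)^(1/(T−1)) is strictly decreasing on the interval (1, ∞). That is, a larger amateur temperature T moves the hypothetical LM size closer to the expert size, reducing the aggressiveness of the extrapolation. -/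
/-- For fixed sizes `s_E > s_A > 0`, the hypothetical LM size
`T ↦ ((s_E)^T / s_A)^(1/(T−1))` is strictly decreasing on `(1, ∞)`. -/
theorem hypothetical_size_strictAntiOn_temperature (sE sA : ℝ)
    (hsA : 0 < sA) (hAE : sA < sE) :
    StrictAntiOn (fun T : ℝ => (sE ^ T / sA) ^ (1 / (T - 1))) (Set.Ioi 1) := by
  have hsE : 0 < sE := hsA.trans hAE
  have hL : Real.log sA < Real.log sE := Real.log_lt_log hsA hAE
  intro a ha b hb hab
  simp only [Set.mem_Ioi] at ha hb
  have ha1 : 0 < a - 1 := by linarith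
  have hb1 : 0 < b - 1 := by linarith
  have key : ∀ T : ℝ, 1 < T → (sE ^ T / sA) ^ (1 / (T - 1)) =
      Real.exp (Real.log sE + (Real.log sE - Real.log sA) / (T - 1)) := by
    intro T hT
    have hT1 : 0 < T - 1 := by linarith
    have hpos : 0 < sE ^ T / sA := div_pos (Real.rpow_pos_of_pos hsE T) hsA
    rw [Real.rpow_def_of_pos hpos]
    congr 1
    rw [Real.log_div (ne_of_gt (Real.rpow_pos_of_pos hsE T)) hsA.ne', Real.log_rpow hsE]
    field_simp
    ring
  simp only
  rw [key a ha, key b hb]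
  apply Real.exp_lt_exp.mpr
  have : (Real.log sE - Real.log sA) / (b - 1) < (Real.log sE - Real.log sA) / (a - 1) :=
    div_lt_div_of_pos_left (by linarith) ha1 (by linarith)
  linarith
end
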